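/- arXiv:2311.07579 — 7 statements merged into one kernel-verified Lean document; each statement's English description precedes it below -/
import Mathlib

section
/- Let d be a positive integer, let c be a point of R^d, and let x and y be independent random vectors, each uniformly distributed on the closed unit ball of radius 1 centered at c in R^d. Then the probability that the inner product of (y - x) with (x - c) is nonnegative equals 1/2^(d+1). -/
/-!
For fixed `y`, the condition `0 ≤ ⟪y - x, x - c⟫` says that `x` lies in the closed ball with
diameter `[c, y]` (Thales). That ball has radius `‖y - c‖ / 2` and lies inside the unit ball, so
its probability is `2⁻ᵈ ‖y - c‖ᵈ`. By the layer-cake formula, `‖y - c‖ᵈ` is uniformly distributed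
on `[0, 1]` when `y` is uniform on the ball, so its mean is `1 / 2`.
-/

open MeasureTheory
open scoped RealInnerProductSpace

/-- The uniform probability distribution on the closed unit ball of radius 1
centered at `c` in `ℝ^d`: the restriction of Lebesgue measure to the ball,
normalized to total mass 1. -/
noncomputable def uniformUnitBall (d : ℕ) (c : EuclideanSpace ℝ (Fin d)) :
    Measure (EuclideanSpace ℝ (Fin d)) :=
  (volume (Metric.closedBall c 1))⁻¹ • volume.restrict (Metric.closedBall c 1)

open Metric Module

section Thales

variable {E : Type*} [NormedAddCommGroup E] [InnerProductSpace ℝ E]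

theorem inner_sub_sub_eq_sq_sub_sq (c x y : E) :
    ⟪y - x, x - c⟫ = (‖y - c‖ / 2) ^ 2 - ‖x - midpoint ℝ c y‖ ^ 2 := by
  have hy : y - x = (y - c) - (x - c) := by abel
  have hm : x - midpoint ℝ c y = (x - c) - (2 : ℝ)⁻¹ • (y - c) := by
    rw [midpoint, AffineMap.lineMap_apply, vsub_eq_sub, vadd_eq_add, invOf_eq_inv]; abel
  rw [hy, hm, inner_sub_left, norm_sub_sq_real, real_inner_self_eq_norm_sq, inner_smul_right,
    norm_smul, real_inner_comm]
  norm_num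
  ring

theorem setOf_inner_sub_nonneg_eq_closedBall (c y : E) :
    {x | 0 ≤ ⟪y - x, x - c⟫} = closedBall (midpoint ℝ c y) (‖y - c‖ / 2) := by
  ext x
  rw [Set.mem_ofPred_eq, inner_sub_sub_eq_sq_sub_sq, sub_nonneg, mem_closedBall, dist_eq_norm,
    sq_le_sq₀ (norm_nonneg _) (by positivity)]

end Thales

theorem closedBall_midpoint_subset_closedBall {E : Type*} [NormedAddCommGroup E]
    [NormedSpace ℝ E] {c y : E} {r : ℝ} (hy : y ∈ closedBall c r) :
    closedBall (midpoint ℝ c y) (‖y - c‖ / 2) ⊆ closedBall c r := by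
  apply closedBall_subset_closedBall'
  rw [dist_midpoint_left, ← dist_eq_norm, dist_comm]
  norm_num
  linarith [mem_closedBall'.mp hy]

theorem setOf_pow_lt_norm_sub_pow_eq_compl {E : Type*} [NormedAddCommGroup E] {n : ℕ}
    (hn : n ≠ 0) (c : E) {s : ℝ} (hs : 0 ≤ s) :
    {y | s ^ n < ‖y - c‖ ^ n} = (closedBall c s)ᶜ := by
  ext y
  rw [Set.mem_ofPred_eq, Set.mem_compl_iff, mem_closedBall, dist_eq_norm, not_le,
    pow_lt_pow_iff_left₀ hs (norm_nonneg _) hn]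

section AddHaar

variable {E : Type*} [NormedAddCommGroup E] [NormedSpace ℝ E] [MeasurableSpace E] [BorelSpace E]
  [FiniteDimensional ℝ E] (μ : Measure E) [μ.IsAddHaarMeasure]

theorem addHaar_closedBall_eq_ofReal_pow_mul (x c : E) {r : ℝ} (hr : 0 ≤ r) :
    μ (closedBall x r) = ENNReal.ofReal (r ^ finrank ℝ E) * μ (closedBall c 1) := by
  rw [Measure.addHaar_closedBall' μ x hr, Measure.addHaar_closedBall_center μ c]

theorem addHaar_restrict_closedBall_pow_lt_norm_sub_pow [Nontrivial E] (c : E) {s : ℝ}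
    (hs : 0 ≤ s) :
    μ.restrict (closedBall c 1) {y | s ^ finrank ℝ E < ‖y - c‖ ^ finrank ℝ E} =
      (1 - ENNReal.ofReal (s ^ finrank ℝ E)) * μ (closedBall c 1) := by
  rw [Measure.restrict_apply' measurableSet_closedBall,
    setOf_pow_lt_norm_sub_pow_eq_compl finrank_pos.ne' c hs, ← Set.sdiff_eq_compl_inter]
  rcases le_or_gt s 1 with hs1 | hs1
  · rw [measure_sdiff (closedBall_subset_closedBall hs1) measurableSet_closedBall.nullMeasurableSet
      measure_closedBall_lt_top.ne, addHaar_closedBall_eq_ofReal_pow_mul μ c c hs,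
      ENNReal.sub_mul fun _ _ ↦ measure_closedBall_lt_top.ne, one_mul]
  · have hle : 1 ≤ s ^ finrank ℝ E := one_le_pow₀ hs1.le
    rw [Set.sdiff_eq_empty.mpr (closedBall_subset_closedBall hs1.le), measure_empty,
      tsub_eq_zero_of_le (ENNReal.one_le_ofReal.mpr hle), zero_mul]

theorem lintegral_one_sub_ofReal_Ioi_zero :
    ∫⁻ t in Set.Ioi (0 : ℝ), (1 - ENNReal.ofReal t) = 2⁻¹ := by
  rw [← Set.Ioc_union_Ioi_eq_Ioi zero_le_one,
    lintegral_union measurableSet_Ioi (Set.Ioc_disjoint_Ioi le_rfl),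
    setLIntegral_congr_fun measurableSet_Ioi fun t (ht : 1 < t) ↦
      tsub_eq_zero_of_le (ENNReal.one_le_ofReal.mpr ht.le),
    setLIntegral_congr_fun measurableSet_Ioc fun t (ht : t ∈ Set.Ioc 0 1) ↦ by
      rw [← ENNReal.ofReal_one, ← ENNReal.ofReal_sub _ ht.1.le],
    lintegral_zero, add_zero, ← ofReal_integral_eq_lintegral_ofReal,
    ← intervalIntegral.integral_of_le zero_le_one]
  · rw [intervalIntegral.integral_sub intervalIntegrable_const
      intervalIntegral.intervalIntegrable_id, integral_id]
    norm_num [← one_div, ENNReal.ofReal_div_of_pos]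
  · exact (continuous_const.sub continuous_id).integrableOn_Ioc
  · filter_upwards [ae_restrict_mem measurableSet_Ioc] with t ht using sub_nonneg.mpr ht.2

theorem lintegral_closedBall_norm_sub_pow_finrank [Nontrivial E] (c : E) :
    ∫⁻ y in closedBall c 1, ENNReal.ofReal (‖y - c‖ ^ finrank ℝ E) ∂μ =
      2⁻¹ * μ (closedBall c 1) := by
  have hn : finrank ℝ E ≠ 0 := finrank_pos.ne'
  rw [lintegral_eq_lintegral_meas_lt _ (ae_of_all _ fun y ↦ by positivity) (by fun_prop),
    setLIntegral_congr_fun measurableSet_Ioi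
      (g := fun t ↦ (1 - ENNReal.ofReal t) * μ (closedBall c 1)) fun t (ht : 0 < t) ↦ by
        simpa only [Real.rpow_inv_natCast_pow ht.le hn] using
          addHaar_restrict_closedBall_pow_lt_norm_sub_pow μ c (s := t ^ (finrank ℝ E : ℝ)⁻¹)
            (by positivity),
    lintegral_mul_const _ (by fun_prop), lintegral_one_sub_ofReal_Ioi_zero]

end AddHaar

namespace uniformUnitBall

variable {d : ℕ} {c : EuclideanSpace ℝ (Fin d)}

instance : IsProbabilityMeasure (uniformUnitBall d c) :=
  ⟨by rw [uniformUnitBall, Measure.smul_apply, Measure.restrict_apply_univ, smul_eq_mul,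
    ENNReal.inv_mul_cancel (measure_closedBall_pos _ _ one_pos).ne' measure_closedBall_lt_top.ne]⟩

theorem ae_mem_closedBall : ∀ᵐ y ∂uniformUnitBall d c, y ∈ closedBall c 1 :=
  Measure.ae_smul_measure (ae_restrict_mem measurableSet_closedBall) _

theorem apply_closedBall_of_subset {x : EuclideanSpace ℝ (Fin d)} {r : ℝ} (hr : 0 ≤ r)
    (h : closedBall x r ⊆ closedBall c 1) :
    uniformUnitBall d c (closedBall x r) = ENNReal.ofReal (r ^ d) := by
  rw [uniformUnitBall, Measure.smul_apply, Measure.restrict_apply measurableSet_closedBall,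
    Set.inter_eq_self_of_subset_left h, addHaar_closedBall_eq_ofReal_pow_mul volume x c hr,
    finrank_euclideanSpace_fin, smul_eq_mul, mul_left_comm,
    ENNReal.inv_mul_cancel (measure_closedBall_pos _ _ one_pos).ne' measure_closedBall_lt_top.ne,
    mul_one]

theorem apply_setOf_inner_sub_nonneg {y : EuclideanSpace ℝ (Fin d)}
    (hy : y ∈ closedBall c 1) :
    uniformUnitBall d c {x | 0 ≤ ⟪y - x, x - c⟫} =
      2⁻¹ ^ d * ENNReal.ofReal (‖y - c‖ ^ d) := by
  rw [setOf_inner_sub_nonneg_eq_closedBall,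
    apply_closedBall_of_subset (by positivity) (closedBall_midpoint_subset_closedBall hy),
    div_pow, div_eq_inv_mul, ENNReal.ofReal_mul (by positivity), ← inv_pow,
    ENNReal.ofReal_pow (by positivity), ENNReal.ofReal_inv_of_pos two_pos, ENNReal.ofReal_ofNat]

theorem lintegral_norm_sub_pow (hd : 0 < d) :
    ∫⁻ y, ENNReal.ofReal (‖y - c‖ ^ d) ∂uniformUnitBall d c = 2⁻¹ := by
  have : Nontrivial (EuclideanSpace ℝ (Fin d)) :=
    nontrivial_of_finrank_pos (R := ℝ) (by simpa using hd)
  have h := lintegral_closedBall_norm_sub_pow_finrank volume c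
  rw [finrank_euclideanSpace_fin] at h
  rw [uniformUnitBall, lintegral_smul_measure, h, smul_eq_mul, mul_left_comm,
    ENNReal.inv_mul_cancel (measure_closedBall_pos _ _ one_pos).ne' measure_closedBall_lt_top.ne,
    mul_one]

end uniformUnitBall

theorem separability_theta_zero (d : ℕ) (hd : 0 < d) (c : EuclideanSpace ℝ (Fin d)) :
    ((uniformUnitBall d c).prod (uniformUnitBall d c))
      {p : EuclideanSpace ℝ (Fin d) × EuclideanSpace ℝ (Fin d) |
        0 ≤ ⟪p.2 - p.1, p.1 - c⟫} = 1 / 2 ^ (d + 1) := by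
  have hS : MeasurableSet {p : EuclideanSpace ℝ (Fin d) × EuclideanSpace ℝ (Fin d) |
      0 ≤ ⟪p.2 - p.1, p.1 - c⟫} := measurableSet_le measurable_const (by fun_prop)
  calc _ = ∫⁻ y, uniformUnitBall d c {x | 0 ≤ ⟪y - x, x - c⟫} ∂uniformUnitBall d c :=
        Measure.prod_apply_symm hS
    _ = ∫⁻ y, 2⁻¹ ^ d * ENNReal.ofReal (‖y - c‖ ^ d) ∂uniformUnitBall d c :=
        lintegral_congr_ae <| uniformUnitBall.ae_mem_closedBall.mono fun _ ↦
          uniformUnitBall.apply_setOf_inner_sub_nonneg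
    _ = 2⁻¹ ^ d * 2⁻¹ := by
        rw [lintegral_const_mul _ (by fun_prop), uniformUnitBall.lintegral_norm_sub_pow hd]
    _ = 1 / 2 ^ (d + 1) := by rw [← pow_succ, one_div, ENNReal.inv_pow]
end

section
/- Let d be a positive integer, let theta be a real number with theta >= 1/4, let c be a point of R^d, and let x and y be independent random vectors, each uniformly distributed on the closed unit ball of radius 1 centered at c in R^d. Then the probability that the inner product of (y - x) with (x - c) is at least theta equals 0. -/
/-!
For `y` in the closed ball of radius `r` about `c`, write `t = ‖x - c‖`. Then
`⟪y - x, x - c⟫ = ⟪y - c, x - c⟫ - t² ≤ r t - t² = r² / 4 - (t - r / 2)²`,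
so for `r = 1` the inner product reaches `1 / 4` only when `x` lies on the sphere of radius `1 / 2`.
Under the uniform distribution both points lie in the unit ball almost surely, and that sphere is
Lebesgue-null, so the event has probability zero.
-/

open MeasureTheory
open scoped RealInnerProductSpace

open ProbabilityTheory Metric

theorem inner_sub_sub_le_of_mem_closedBall {E : Type*} [NormedAddCommGroup E]
    [InnerProductSpace ℝ E] {x y c : E} {r : ℝ} (hy : y ∈ closedBall c r) :
    ⟪y - x, x - c⟫ ≤ r ^ 2 / 4 - (‖x - c‖ - r / 2) ^ 2 := by
  have hyc : ‖y - c‖ ≤ r := by rwa [mem_closedBall, dist_eq_norm] at hy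
  have hsplit : ⟪y - x, x - c⟫ = ⟪y - c, x - c⟫ - ‖x - c‖ ^ 2 := by
    rw [← sub_sub_sub_cancel_right y x c, inner_sub_left, real_inner_self_eq_norm_sq]
  calc ⟪y - x, x - c⟫ ≤ ‖y - c‖ * ‖x - c‖ - ‖x - c‖ ^ 2 := by
        rw [hsplit]; gcongr; exact real_inner_le_norm _ _
    _ ≤ r * ‖x - c‖ - ‖x - c‖ ^ 2 := by gcongr
    _ = r ^ 2 / 4 - (‖x - c‖ - r / 2) ^ 2 := by ring

theorem mem_sphere_of_quarter_le_inner {E : Type*} [NormedAddCommGroup E]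
    [InnerProductSpace ℝ E] {x y c : E} (hy : y ∈ closedBall c 1)
    (hxy : 1 / 4 ≤ ⟪y - x, x - c⟫) : x ∈ sphere c (1 / 2) := by
  have hle := inner_sub_sub_le_of_mem_closedBall (x := x) hy
  have hsq : (‖x - c‖ - 1 / 2) ^ 2 = 0 := by nlinarith [sq_nonneg (‖x - c‖ - 1 / 2)]
  rw [mem_sphere, dist_eq_norm]
  linarith [pow_eq_zero_iff two_ne_zero |>.mp hsq]

theorem uniformUnitBall_eq_cond (d : ℕ) (c : EuclideanSpace ℝ (Fin d)) :
    uniformUnitBall d c = volume[|closedBall c 1] := rfl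

theorem ae_uniformUnitBall_mem_closedBall (d : ℕ) (c : EuclideanSpace ℝ (Fin d)) :
    ∀ᵐ x ∂uniformUnitBall d c, x ∈ closedBall c 1 := by
  rw [uniformUnitBall_eq_cond]
  exact ae_cond_mem measurableSet_closedBall

theorem ae_uniformUnitBall_notMem_sphere (d : ℕ) (c : EuclideanSpace ℝ (Fin d)) {r : ℝ}
    (hr : r ≠ 0) : ∀ᵐ x ∂uniformUnitBall d c, x ∉ sphere c r := by
  rw [uniformUnitBall_eq_cond]
  exact measure_eq_zero_iff_ae_notMem.mp <|
    cond_absolutelyContinuous (Measure.addHaar_sphere_of_ne_zero volume c hr)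

theorem separability_theta_ge_quarter_general (d : ℕ) (θ : ℝ) (hθ : 1 / 4 ≤ θ)
    (c : EuclideanSpace ℝ (Fin d)) :
    ((uniformUnitBall d c).prod (uniformUnitBall d c))
      {p : EuclideanSpace ℝ (Fin d) × EuclideanSpace ℝ (Fin d) |
        θ ≤ ⟪p.2 - p.1, p.1 - c⟫} = 0 := by
  rw [measure_eq_zero_iff_ae_notMem]
  have hfst := ae_uniformUnitBall_notMem_sphere d c one_half_pos.ne'
  have hsnd := ae_uniformUnitBall_mem_closedBall d c
  filter_upwards [Measure.quasiMeasurePreserving_fst.ae hfst,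
    Measure.quasiMeasurePreserving_snd.ae hsnd] with p hx hy hp
  exact hx (mem_sphere_of_quarter_le_inner hy (hθ.trans hp))

theorem separability_theta_ge_quarter (d : ℕ) (hd : 0 < d) (θ : ℝ) (hθ : 1 / 4 ≤ θ)
    (c : EuclideanSpace ℝ (Fin d)) :
    ((uniformUnitBall d c).prod (uniformUnitBall d c))
      {p : EuclideanSpace ℝ (Fin d) × EuclideanSpace ℝ (Fin d) |
        θ ≤ ⟪p.2 - p.1, p.1 - c⟫} = 0 :=
  separability_theta_ge_quarter_general d θ hθ c
end

section
/- Let d be a positive integer, let theta >= 0 be a real number, and let y be a point of R^d with norm at most 1. Then the d-dimensional Lebesgue measure of the set of points x in R^d satisfying both norm(x) <= 1 and inner product of (y - x) with x at least theta equals the Lebesgue measure of a ball in R^d of radius max(norm(y)^2/4 - theta, 0)^(1/2). -/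
/-! Completing the square, `⟪y - x, x⟫ = ‖y‖² / 4 - ‖x - y / 2‖²`, so the condition `θ ≤ ⟪y - x, x⟫`
cuts out the closed ball of radius `√(‖y‖² / 4 - θ)` about `y / 2` (or nothing, if `θ > ‖y‖² / 4`).
For `θ ≥ 0` this ball lies in the closed ball of radius `‖y‖ ≤ 1` about the origin, so the condition
`‖x‖ ≤ 1` is redundant, and translation invariance of Lebesgue measure moves the centre to `0`. -/

open MeasureTheory
open scoped RealInnerProductSpace

section InnerProductSpace

variable {E : Type*} [NormedAddCommGroup E] [InnerProductSpace ℝ E]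

theorem norm_sub_half_smul_sq (x y : E) :
    ‖x - (2⁻¹ : ℝ) • y‖ ^ 2 = ‖y‖ ^ 2 / 4 - ⟪y - x, x⟫ := by
  rw [norm_sub_sq_real, real_inner_smul_right, norm_smul, inner_sub_left,
    real_inner_self_eq_norm_sq, real_inner_comm]
  norm_num
  ring

theorem le_inner_sub_self_iff (θ : ℝ) (x y : E) :
    θ ≤ ⟪y - x, x⟫ ↔ ‖x - (2⁻¹ : ℝ) • y‖ ^ 2 ≤ ‖y‖ ^ 2 / 4 - θ := by
  rw [norm_sub_half_smul_sq]
  constructor <;> intro h <;> linarith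

theorem setOf_le_inner_sub_self_eq_closedBall {θ : ℝ} {y : E} (hθ : θ ≤ ‖y‖ ^ 2 / 4) :
    {x : E | θ ≤ ⟪y - x, x⟫} =
      Metric.closedBall ((2⁻¹ : ℝ) • y) (Real.sqrt (‖y‖ ^ 2 / 4 - θ)) := by
  ext x
  rw [Set.mem_ofPred_eq, le_inner_sub_self_iff, Metric.mem_closedBall, dist_eq_norm,
    Real.le_sqrt (norm_nonneg _) (by linarith)]

theorem setOf_le_inner_sub_self_eq_empty {θ : ℝ} {y : E} (hθ : ‖y‖ ^ 2 / 4 < θ) :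
    {x : E | θ ≤ ⟪y - x, x⟫} = ∅ := by
  ext x
  simp only [Set.mem_ofPred_eq, Set.mem_empty_iff_false, iff_false, le_inner_sub_self_iff]
  nlinarith [sq_nonneg ‖x - (2⁻¹ : ℝ) • y‖]

theorem norm_le_of_nonneg_inner_sub_self {x y : E} (h : 0 ≤ ⟪y - x, x⟫) : ‖x‖ ≤ ‖y‖ := by
  rw [inner_sub_left, real_inner_self_eq_norm_sq] at h
  have hyx : ‖x‖ ^ 2 ≤ ‖y‖ * ‖x‖ := by linarith [real_inner_le_norm y x]
  nlinarith [norm_nonneg x, norm_nonneg y]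

end InnerProductSpace

theorem ball_intersection_volume (d : ℕ) (hd : 0 < d) (θ : ℝ) (hθ : 0 ≤ θ)
    (y : EuclideanSpace ℝ (Fin d)) (hy : ‖y‖ ≤ 1) :
    volume {x : EuclideanSpace ℝ (Fin d) | ‖x‖ ≤ 1 ∧ θ ≤ ⟪y - x, x⟫}
      = volume (Metric.closedBall (0 : EuclideanSpace ℝ (Fin d))
          (Real.sqrt (max (‖y‖ ^ 2 / 4 - θ) 0))) := by
  have hunit : {x : EuclideanSpace ℝ (Fin d) | ‖x‖ ≤ 1 ∧ θ ≤ ⟪y - x, x⟫}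
      = {x | θ ≤ ⟪y - x, x⟫} := by
    ext x
    refine ⟨And.right, fun h => ⟨?_, h⟩⟩
    exact (norm_le_of_nonneg_inner_sub_self (hθ.trans h)).trans hy
  rw [hunit]
  rcases lt_or_ge (‖y‖ ^ 2 / 4) θ with hlt | hle
  · have : Nonempty (Fin d) := ⟨⟨0, hd⟩⟩
    rw [setOf_le_inner_sub_self_eq_empty hlt, max_eq_right (by linarith), Real.sqrt_zero,
      Metric.closedBall_zero, measure_empty, measure_singleton]
  · rw [setOf_le_inner_sub_self_eq_closedBall hle, max_eq_left (by linarith),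
      Measure.addHaar_closedBall_center]
end

section
/- Let d be a positive integer and let r, h be real numbers with 0 < h <= r. Then the d-dimensional Lebesgue measure of the spherical cap { x in R^d : norm(x) <= r and x_1 >= r - h } (where x_1 is the first coordinate of x) equals V_d(r) * (1/2) * I_{(2rh - h^2)/r^2}((d+1)/2, 1/2), where V_d(r) = pi^(d/2) r^d / Gamma(d/2 + 1) is the volume of the ball of radius r in R^d. -/
/-!
Slicing the cap by the hyperplanes `x₀ = t`, the slice at height `t ∈ [r - h, r]` is a
`(d - 1)`-ball of radius `√(r² - t²)`, so the cap has volume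
`V_{d-1}(1) ∫_{r-h}^r (r² - t²)^((d-1)/2) dt`. The substitution `s = 1 - t²/r²` turns this integral
into `r^d / 2 · ∫_0^{(2rh-h²)/r²} s^((d-1)/2) (1 - s)^(-1/2) ds`, and the constants match because
`B((d+1)/2, 1/2) = Γ((d+1)/2) √π / Γ(d/2 + 1)`.
-/

open MeasureTheory

/-- The regularized incomplete beta function
`I_x(p, q) = (∫_0^x s^(p-1) (1-s)^(q-1) ds) / (∫_0^1 s^(p-1) (1-s)^(q-1) ds)`. -/
noncomputable def regIncBeta (x p q : ℝ) : ℝ :=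
  (∫ s in (0:ℝ)..x, s ^ (p - 1) * (1 - s) ^ (q - 1)) /
    (∫ s in (0:ℝ)..1, s ^ (p - 1) * (1 - s) ^ (q - 1))

open Set Real

theorem volume_setOf_sum_sq_le {ι : Type*} [Fintype ι] {c : ℝ} (hc : 0 ≤ c) :
    volume {y : ι → ℝ | ∑ i, y i ^ 2 ≤ c}
      = ENNReal.ofReal (π ^ ((Fintype.card ι : ℝ) / 2) / Gamma (Fintype.card ι / 2 + 1)
          * c ^ ((Fintype.card ι : ℝ) / 2)) := by
  cases isEmpty_or_nonempty ι with
  | inl _ => simp [hc, volume_pi]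
  | inr _ =>
    have hball : {y : ι → ℝ | ∑ i, y i ^ 2 ≤ c}
        = WithLp.toLp 2 ⁻¹' Metric.closedBall (0 : EuclideanSpace ℝ ι) √c := by
      ext y
      simp [EuclideanSpace.norm_eq, sqrt_le_sqrt_iff hc]
    rw [hball, (PiLp.volume_preserving_toLp ι).measure_preimage
      measurableSet_closedBall.nullMeasurableSet, EuclideanSpace.volume_closedBall,
      ← ENNReal.ofReal_pow (sqrt_nonneg c), ← ENNReal.ofReal_mul (by positivity), ← rpow_natCast,
      ← rpow_natCast, ← rpow_div_two_eq_sqrt _ hc, ← rpow_div_two_eq_sqrt _ pi_pos.le, mul_comm]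

theorem EuclideanSpace.measurePreserving_apply_zero_prod_apply_succ (n : ℕ) :
    MeasurePreserving
      (fun x : EuclideanSpace ℝ (Fin (n + 1)) => (x 0, fun i : Fin n => x i.succ)) :=
  (volume_preserving_piFinSuccAbove (fun _ => ℝ) 0).comp (PiLp.volume_preserving_ofLp _)

theorem volume_cap_eq_integral (n : ℕ) {a r : ℝ} (hr : 0 ≤ r) (ha : -r ≤ a) :
    volume {x : EuclideanSpace ℝ (Fin (n + 1)) | ‖x‖ ≤ r ∧ a ≤ x 0}
      = ENNReal.ofReal (π ^ ((n : ℝ) / 2) / Gamma (n / 2 + 1)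
          * ∫ t in Icc a r, (r ^ 2 - t ^ 2) ^ ((n : ℝ) / 2)) := by
  set c := π ^ ((n : ℝ) / 2) / Gamma (n / 2 + 1)
  set T : Set (ℝ × (Fin n → ℝ)) := {p | p.1 ^ 2 + ∑ i, p.2 i ^ 2 ≤ r ^ 2 ∧ a ≤ p.1}
  have hT : MeasurableSet T := by
    have : Measurable fun p : ℝ × (Fin n → ℝ) => p.1 ^ 2 + ∑ i, p.2 i ^ 2 := by fun_prop
    exact (measurableSet_le this measurable_const).inter
      (measurableSet_le measurable_const measurable_fst)
  have hcap : {x : EuclideanSpace ℝ (Fin (n + 1)) | ‖x‖ ≤ r ∧ a ≤ x 0}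
      = (fun x : EuclideanSpace ℝ (Fin (n + 1)) => (x 0, fun i : Fin n => x i.succ)) ⁻¹' T := by
    ext x
    simp [T, EuclideanSpace.norm_eq, Fin.sum_univ_succ,
      ← sqrt_le_sqrt_iff (by positivity : 0 ≤ r ^ 2), sqrt_sq hr]
  have hslice : ∀ t, volume (Prod.mk t ⁻¹' T)
      = (Icc a r).indicator (fun t => ENNReal.ofReal (c * (r ^ 2 - t ^ 2) ^ ((n : ℝ) / 2))) t := by
    intro t
    by_cases ht : t ∈ Icc a r
    · have hball : Prod.mk t ⁻¹' T = {y | ∑ i, y i ^ 2 ≤ r ^ 2 - t ^ 2} := by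
        ext y
        simp [T, ht.1, le_sub_iff_add_le']
      have hsq : 0 ≤ r ^ 2 - t ^ 2 := by nlinarith [ht.1, ht.2]
      rw [hball, volume_setOf_sum_sq_le hsq, indicator_of_mem ht, Fintype.card_fin]
    · have hempty : Prod.mk t ⁻¹' T = ∅ := by
        ext y
        simp only [T, mem_preimage, mem_ofPred_eq, mem_empty_iff_false, iff_false, not_and]
        intro hy hat
        have : 0 ≤ ∑ i, y i ^ 2 := by positivity
        exact ht ⟨hat, (abs_le_of_sq_le_sq' (by nlinarith) hr).2⟩
      rw [hempty, measure_empty, indicator_of_notMem ht]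
  have hint : IntegrableOn (fun t => (r ^ 2 - t ^ 2) ^ ((n : ℝ) / 2)) (Icc a r) :=
    ((by fun_prop : Continuous fun t : ℝ => r ^ 2 - t ^ 2).rpow_const
      fun _ => Or.inr (by positivity)).integrableOn_Icc
  rw [hcap, (EuclideanSpace.measurePreserving_apply_zero_prod_apply_succ n).measure_preimage
    hT.nullMeasurableSet, Measure.volume_eq_prod, Measure.prod_apply hT, lintegral_congr hslice,
    lintegral_indicator measurableSet_Icc, ← integral_const_mul,
    ofReal_integral_eq_lintegral_ofReal (hint.const_mul c)]
  refine ae_restrict_of_forall_mem measurableSet_Icc fun t ht =>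
    mul_nonneg ?_ (rpow_nonneg (by nlinarith [ht.1, ht.2]) _)
  exact div_nonneg (by positivity) (Gamma_pos_of_pos (by positivity)).le

theorem integral_rpow_mul_one_sub_rpow_eq_beta {p q : ℝ} (hp : 0 < p) (hq : 0 < q) :
    ∫ s in (0:ℝ)..1, s ^ (p - 1) * (1 - s) ^ (q - 1) = ProbabilityTheory.beta p q := by
  have hcast : Complex.betaIntegral p q
      = ↑(∫ s in (0:ℝ)..1, s ^ (p - 1) * (1 - s) ^ (q - 1)) := by
    rw [← intervalIntegral.integral_ofReal, Complex.betaIntegral]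
    refine intervalIntegral.integral_congr fun s hs => ?_
    rw [uIcc_of_le zero_le_one] at hs
    push_cast
    rw [Complex.ofReal_cpow hs.1, Complex.ofReal_cpow (sub_nonneg.2 hs.2)]
    push_cast
    ring_nf
  rw [ProbabilityTheory.beta_eq_betaIntegralReal p q hp hq, hcast, Complex.ofReal_re]

theorem image_one_sub_sq_div_sq_Ioo {a r : ℝ} (ha : 0 ≤ a) (har : a < r) :
    (fun t => 1 - t ^ 2 / r ^ 2) '' Ioo a r = Ioo 0 (1 - a ^ 2 / r ^ 2) := by
  have hr : 0 < r := ha.trans_lt har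
  refine Subset.antisymm ?_ ?_
  · rintro _ ⟨t, ⟨hat, htr⟩, rfl⟩
    have hsq : t ^ 2 < r ^ 2 := by nlinarith
    have hsq' : a ^ 2 < t ^ 2 := by nlinarith
    constructor
    · rw [sub_pos, div_lt_one (by positivity)]
      exact hsq
    · exact sub_lt_sub_left (div_lt_div_of_pos_right hsq' (by positivity)) 1
  · have hcont : ContinuousOn (fun t : ℝ => 1 - t ^ 2 / r ^ 2) (Icc a r) := by fun_prop
    simpa [hr.ne'] using intermediate_value_Ioo' har.le hcont

theorem abs_deriv_mul_rpow_one_sub_sq_div_sq {p r t : ℝ} (ht : 0 < t) (htr : t < r) :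
    |-(2 * t / r ^ 2)| * ((1 - t ^ 2 / r ^ 2) ^ p * (1 - (1 - t ^ 2 / r ^ 2)) ^ (-(1 / 2) : ℝ))
      = 2 / r ^ (2 * p + 1) * (r ^ 2 - t ^ 2) ^ p := by
  have hr : 0 < r := ht.trans htr
  have hcompl : 1 - (1 - t ^ 2 / r ^ 2) = (t / r) ^ 2 := by ring
  have hs : 1 - t ^ 2 / r ^ 2 = (r ^ 2 - t ^ 2) / r ^ 2 := by field_simp
  have hsingular : ((t / r) ^ 2) ^ (-(1 / 2) : ℝ) = r / t := by
    rw [← rpow_natCast, ← rpow_mul (by positivity)]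
    norm_num [rpow_neg_one]
  have hr2 : (r ^ 2) ^ p = r ^ (2 * p) := by
    rw [← rpow_natCast, ← rpow_mul hr.le]
    norm_num
  rw [hcompl, hs, hsingular, div_rpow (by nlinarith) (by positivity), hr2, rpow_add_one hr.ne',
    abs_neg, abs_div, abs_of_pos (by positivity), abs_of_pos (by positivity)]
  field_simp

theorem integral_rpow_mul_one_sub_rpow_neg_half {p a r : ℝ} (ha : 0 ≤ a) (har : a < r) :
    ∫ s in (0:ℝ)..(1 - a ^ 2 / r ^ 2), s ^ p * (1 - s) ^ (-(1 / 2) : ℝ)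
      = 2 / r ^ (2 * p + 1) * ∫ t in Ioo a r, (r ^ 2 - t ^ 2) ^ p := by
  have hr : 0 < r := ha.trans_lt har
  have hderiv : ∀ t ∈ Ioo a r, HasDerivWithinAt (fun t => 1 - t ^ 2 / r ^ 2)
      (-(2 * t / r ^ 2)) (Ioo a r) t := fun t _ => by
    simpa using ((hasDerivAt_pow 2 t).div_const (r ^ 2)).const_sub 1 |>.hasDerivWithinAt
  have hinj : InjOn (fun t => 1 - t ^ 2 / r ^ 2) (Ioo a r) := fun s hs t ht hst => by
    have : s ^ 2 = t ^ 2 := by field_simp at hst; linarith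
    nlinarith [hs.1, ht.1]
  -- The one-dimensional Jacobian formula needs no integrability of the singular integrand.
  rw [intervalIntegral.integral_of_le, integral_Ioc_eq_integral_Ioo,
    ← image_one_sub_sq_div_sq_Ioo ha har,
    integral_image_eq_integral_abs_deriv_smul measurableSet_Ioo hderiv hinj, ← integral_const_mul]
  · exact setIntegral_congr_fun measurableSet_Ioo fun t ht =>
      abs_deriv_mul_rpow_one_sub_sq_div_sq (ha.trans_lt ht.1) ht.2
  · exact sub_nonneg.2 ((div_le_one (by positivity)).2 (by nlinarith))

theorem spherical_cap_volume (d : ℕ) (hd : 0 < d) (r h : ℝ) (hh : 0 < h) (hhr : h ≤ r) :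
    volume {x : EuclideanSpace ℝ (Fin d) | ‖x‖ ≤ r ∧ r - h ≤ x ⟨0, hd⟩}
      = ENNReal.ofReal
          (Real.pi ^ ((d : ℝ) / 2) * r ^ d / Real.Gamma ((d : ℝ) / 2 + 1) *
            ((1 / 2) * regIncBeta ((2 * r * h - h ^ 2) / r ^ 2) (((d : ℝ) + 1) / 2) (1 / 2))) := by
  obtain ⟨n, rfl⟩ : ∃ n, d = n + 1 := ⟨d - 1, by omega⟩
  have hr : 0 < r := hh.trans_le hhr
  have hx : (2 * r * h - h ^ 2) / r ^ 2 = 1 - (r - h) ^ 2 / r ^ 2 := by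
    field_simp
    ring
  have hp : ((↑(n + 1) : ℝ) + 1) / 2 = n / 2 + 1 := by push_cast; ring
  have hbeta : ProbabilityTheory.beta (n / 2 + 1) (1 / 2)
      = Gamma (n / 2 + 1) * √π / Gamma ((↑(n + 1) : ℝ) / 2 + 1) := by
    rw [ProbabilityTheory.beta, Gamma_one_half_eq]
    congr 2
    push_cast
    ring
  have hrpow : r ^ (2 * ((n : ℝ) / 2) + 1) = r ^ (n + 1) := by
    rw [← rpow_natCast]; push_cast; ring_nf
  have hpi : π ^ ((↑(n + 1) : ℝ) / 2) = π ^ ((n : ℝ) / 2) * √π := by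
    rw [sqrt_eq_rpow, ← rpow_add pi_pos]; push_cast; ring_nf
  rw [show (⟨0, hd⟩ : Fin (n + 1)) = 0 from rfl, volume_cap_eq_integral n hr.le (by linarith),
    regIncBeta, hp, integral_rpow_mul_one_sub_rpow_eq_beta (by positivity) (by norm_num), hbeta,
    add_sub_cancel_right, show (1 : ℝ) / 2 - 1 = -(1 / 2) by norm_num, hx,
    integral_rpow_mul_one_sub_rpow_neg_half (by linarith) (by linarith),
    hrpow, hpi, integral_Icc_eq_integral_Ioo]
  have := Gamma_pos_of_pos (by positivity : (0 : ℝ) < n / 2 + 1)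
  have := Gamma_pos_of_pos (by positivity : (0 : ℝ) < (↑(n + 1) : ℝ) / 2 + 1)
  field_simp
end

section
/- Let d and k be positive integers, let Y be a Borel probability measure on R^d, let c be a point of R^d, and let theta be a real number. Let p = (Y tensor Y)({(y', y) : inner product of (y' - y) with (y - c) is at least theta}). Consider y drawn from Y and y_1, ..., y_k drawn independently from Y, all mutually independent. Then the probability that (1/k) * sum over i from 1 to k of the inner product of (y - y_i) with (y_i - c) is at least theta is at least p^k. -/
/-!
Call a pair `(y', y)` good when `⟪y' - y, y - c⟫ ≥ θ`. If every pair `(y, yᵢ)` is good then so is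
their average, so the event in question contains `{∀ i, (y, yᵢ) good}`. Conditionally on `y`
the `yᵢ` are independent, so this event has probability `∫ f(y)^k dY(y)`, where `f(y)` is the
conditional probability of one good pair, and Jensen's inequality
`(∫ f)^k ≤ ∫ f^k` bounds it below by `(∫ f)^k = p^k`.
-/

open MeasureTheory
open scoped RealInnerProductSpace ENNReal

theorem pow_lintegral_le_lintegral_pow {α : Type*} [MeasurableSpace α] (μ : Measure α)
    [IsProbabilityMeasure μ] {f : α → ℝ≥0∞} (hf : AEMeasurable f μ) (k : ℕ) :
    (∫⁻ a, f a ∂μ) ^ k ≤ ∫⁻ a, f a ^ k ∂μ := by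
  rcases k.eq_zero_or_pos with rfl | hk
  · simp
  have hk_real : (0 : ℝ) < k := by exact_mod_cast hk
  have h_one := lintegral_rpow_enorm_eq_rpow_eLpNorm' (f := f) (μ := μ) one_pos
  have h_k := lintegral_rpow_enorm_eq_rpow_eLpNorm' (f := f) (μ := μ) hk_real
  simp only [enorm_eq_self, ENNReal.rpow_one, ENNReal.rpow_natCast] at h_one h_k
  rw [h_one, h_k]
  exact pow_le_pow_left'
    (eLpNorm'_le_eLpNorm'_of_exponent_le one_pos (by exact_mod_cast hk) μ hf.aestronglyMeasurable) k

theorem prod_pow_le_prod_pi_forall_mem {α β ι : Type*} [MeasurableSpace α] [MeasurableSpace β]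
    [Fintype ι] (μ : Measure α) [IsProbabilityMeasure μ] (ν : Measure β) [SigmaFinite ν]
    {s : Set (α × β)} (hs : MeasurableSet s) :
    μ.prod ν s ^ Fintype.card ι ≤
      μ.prod (Measure.pi fun _ : ι => ν) {p | ∀ i, (p.1, p.2 i) ∈ s} := by
  have hs_pi : MeasurableSet {p : α × (ι → β) | ∀ i, (p.1, p.2 i) ∈ s} := by
    simp only [Set.ofPred_forall]
    exact .iInter fun i => hs.preimage (by fun_prop)
  have h_slice (x : α) : Prod.mk x ⁻¹' {p : α × (ι → β) | ∀ i, (p.1, p.2 i) ∈ s} =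
      Set.univ.pi fun _ => Prod.mk x ⁻¹' s := by
    ext; simp
  rw [Measure.prod_apply hs, Measure.prod_apply hs_pi]
  calc (∫⁻ x, ν (Prod.mk x ⁻¹' s) ∂μ) ^ Fintype.card ι
      ≤ ∫⁻ x, ν (Prod.mk x ⁻¹' s) ^ Fintype.card ι ∂μ :=
        pow_lintegral_le_lintegral_pow μ (measurable_measure_prodMk_left hs).aemeasurable _
    _ = _ := lintegral_congr fun x => by simp [h_slice, Measure.pi_pi]

theorem learning_lower_bound_Y_general (d k : ℕ) (hk : 0 < k)
    (Y : Measure (EuclideanSpace ℝ (Fin d))) [IsProbabilityMeasure Y]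
    (c : EuclideanSpace ℝ (Fin d)) (θ : ℝ) :
    ((Y.prod Y)
        {q : EuclideanSpace ℝ (Fin d) × EuclideanSpace ℝ (Fin d) |
          θ ≤ ⟪q.1 - q.2, q.2 - c⟫}) ^ k
      ≤ (Y.prod (Measure.pi fun _ : Fin k => Y))
          {p : EuclideanSpace ℝ (Fin d) × (Fin k → EuclideanSpace ℝ (Fin d)) |
            θ ≤ (1 / (k : ℝ)) * ∑ i, ⟪p.1 - p.2 i, p.2 i - c⟫} := by
  have h_good : MeasurableSet
      {q : EuclideanSpace ℝ (Fin d) × EuclideanSpace ℝ (Fin d) | θ ≤ ⟪q.1 - q.2, q.2 - c⟫} :=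
    measurableSet_le measurable_const (by fun_prop)
  have h_all := prod_pow_le_prod_pi_forall_mem (ι := Fin k) Y Y h_good
  rw [Fintype.card_fin] at h_all
  refine h_all.trans (measure_mono fun p hp => ?_)
  have h_mean : θ ≤ Finset.univ.expect fun i => ⟪p.1 - p.2 i, p.2 i - c⟫ :=
    Finset.le_expect (Finset.univ_nonempty_iff.mpr ⟨⟨0, hk⟩⟩) fun i _ => hp i
  simpa [Finset.expect_eq_sum_div_card, div_eq_inv_mul] using h_mean

theorem learning_lower_bound_Y (d k : ℕ) (hd : 0 < d) (hk : 0 < k)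
    (Y : Measure (EuclideanSpace ℝ (Fin d))) [IsProbabilityMeasure Y]
    (c : EuclideanSpace ℝ (Fin d)) (θ : ℝ) :
    ((Y.prod Y)
        {q : EuclideanSpace ℝ (Fin d) × EuclideanSpace ℝ (Fin d) |
          θ ≤ ⟪q.1 - q.2, q.2 - c⟫}) ^ k
      ≤ (Y.prod (Measure.pi fun _ : Fin k => Y))
          {p : EuclideanSpace ℝ (Fin d) × (Fin k → EuclideanSpace ℝ (Fin d)) |
            θ ≤ (1 / (k : ℝ)) * ∑ i, ⟪p.1 - p.2 i, p.2 i - c⟫} :=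
  learning_lower_bound_Y_general d k hk Y c θ
end

section
/- Let d and k be positive integers, let Y be a Borel probability measure on R^d, let c be a point of R^d, and let theta be a real number. Let p = (Y tensor Y)({(y', y) : inner product of (y' - y) with (y - c) is at least theta}). Consider y drawn from Y and y_1, ..., y_k drawn independently from Y, all mutually independent. Then the probability that (1/k) * sum over i from 1 to k of the inner product of (y - y_i) with (y_i - c) is at least theta is at most 1 - (1 - p)^k. -/
open MeasureTheory
open scoped RealInnerProductSpace ENNReal

/-! If the average of the `k` terms `⟪y - yᵢ, yᵢ - c⟫` is at least `θ`, then so is one of them, so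
the event lies in the union of the events `(y, yᵢ) ∈ A`, where `A` is the set of `Y ⊗ Y`-measure `p`.
Given `y`, the samples `yᵢ` all avoid the section `A_y` with probability `q(y) ^ k`, where
`q(y) = Y (A_yᶜ)`, and by Jensen's inequality `∫ q ^ k dY ≥ (∫ q dY) ^ k = (1 - p) ^ k`. -/

namespace MeasureTheory

theorem lintegral_pow_le_lintegral_pow {α : Type*} [MeasurableSpace α] (μ : Measure α)
    [IsProbabilityMeasure μ] {g : α → ℝ≥0∞} (hg : AEMeasurable g μ) (k : ℕ) :
    (∫⁻ a, g a ∂μ) ^ k ≤ ∫⁻ a, g a ^ k ∂μ := by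
  rcases Nat.eq_zero_or_pos k with rfl | hk
  · simp
  have hk' : (0 : ℝ) < k := by exact_mod_cast hk
  have hL1_le_Lk := eLpNorm'_le_eLpNorm'_of_exponent_le one_pos (Nat.one_le_cast.mpr hk) μ
    hg.aestronglyMeasurable
  simp only [eLpNorm'_eq_lintegral_enorm, enorm_eq_self, ENNReal.rpow_one, ENNReal.rpow_natCast,
    div_one] at hL1_le_Lk
  rwa [one_div, ENNReal.le_rpow_inv_iff hk', ENNReal.rpow_natCast] at hL1_le_Lk

section ProdPi

variable {α β ι : Type*} [MeasurableSpace α] [MeasurableSpace β] [Fintype ι]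
  {μ : Measure α} {ν : Measure β} {A : Set (α × β)}

theorem measurableSet_forall_notMem_prod_pi (hA : MeasurableSet A) :
    MeasurableSet {p : α × (ι → β) | ∀ i, (p.1, p.2 i) ∉ A} := by
  simp only [Set.ofPred_forall]
  exact .iInter fun i =>
    (hA.preimage (measurable_fst.prodMk ((measurable_pi_apply i).comp measurable_snd))).compl

theorem measure_prod_pi_forall_notMem [SigmaFinite μ] [SigmaFinite ν] (hA : MeasurableSet A) :
    (μ.prod (Measure.pi fun _ : ι => ν)) {p | ∀ i, (p.1, p.2 i) ∉ A}
      = ∫⁻ x, ν (Prod.mk x ⁻¹' Aᶜ) ^ Fintype.card ι ∂μ := by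
  rw [Measure.prod_apply (measurableSet_forall_notMem_prod_pi hA)]
  refine lintegral_congr fun x => ?_
  have hsection : Prod.mk x ⁻¹' {p : α × (ι → β) | ∀ i, (p.1, p.2 i) ∉ A}
      = Set.univ.pi fun _ => Prod.mk x ⁻¹' Aᶜ := by
    ext; simp
  rw [hsection, Measure.pi_pi, Finset.prod_const, Finset.card_univ]

theorem measure_prod_pi_exists_mem_le [IsProbabilityMeasure μ] [IsProbabilityMeasure ν]
    (hA : MeasurableSet A) :
    (μ.prod (Measure.pi fun _ : ι => ν)) {p | ∃ i, (p.1, p.2 i) ∈ A}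
      ≤ 1 - (1 - μ.prod ν A) ^ Fintype.card ι := by
  have hcompl : {p : α × (ι → β) | ∃ i, (p.1, p.2 i) ∈ A} = {p | ∀ i, (p.1, p.2 i) ∉ A}ᶜ := by
    ext; simp
  have hsection_meas : Measurable fun x => ν (Prod.mk x ⁻¹' Aᶜ) :=
    measurable_measure_prodMk_left hA.compl
  have hmiss : (1 - μ.prod ν A) ^ Fintype.card ι
      ≤ (μ.prod (Measure.pi fun _ : ι => ν)) {p | ∀ i, (p.1, p.2 i) ∉ A} := by
    calc (1 - μ.prod ν A) ^ Fintype.card ι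
        = (∫⁻ x, ν (Prod.mk x ⁻¹' Aᶜ) ∂μ) ^ Fintype.card ι := by
          rw [← Measure.prod_apply hA.compl, prob_compl_eq_one_sub hA]
      _ ≤ ∫⁻ x, ν (Prod.mk x ⁻¹' Aᶜ) ^ Fintype.card ι ∂μ :=
          lintegral_pow_le_lintegral_pow μ hsection_meas.aemeasurable _
      _ = _ := (measure_prod_pi_forall_notMem hA).symm
  rw [hcompl, prob_compl_eq_one_sub (measurableSet_forall_notMem_prod_pi hA)]
  exact tsub_le_tsub_left hmiss 1

end ProdPi

end MeasureTheory

theorem learning_upper_bound_Y_general (d k : ℕ) (hk : 0 < k)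
    (Y : Measure (EuclideanSpace ℝ (Fin d))) [IsProbabilityMeasure Y]
    (c : EuclideanSpace ℝ (Fin d)) (θ : ℝ) :
    (Y.prod (Measure.pi fun _ : Fin k => Y))
        {p : EuclideanSpace ℝ (Fin d) × (Fin k → EuclideanSpace ℝ (Fin d)) |
          θ ≤ (1 / (k : ℝ)) * ∑ i, ⟪p.1 - p.2 i, p.2 i - c⟫}
      ≤ 1 - (1 - (Y.prod Y)
          {q : EuclideanSpace ℝ (Fin d) × EuclideanSpace ℝ (Fin d) |
            θ ≤ ⟪q.1 - q.2, q.2 - c⟫}) ^ k := by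
  set A := {q : EuclideanSpace ℝ (Fin d) × EuclideanSpace ℝ (Fin d) | θ ≤ ⟪q.1 - q.2, q.2 - c⟫}
  have hA : MeasurableSet A := (isClosed_le continuous_const (by fun_prop)).measurableSet
  have hnonempty : (Finset.univ : Finset (Fin k)).Nonempty := Finset.univ_nonempty_iff.mpr ⟨⟨0, hk⟩⟩
  have havg : {p : EuclideanSpace ℝ (Fin d) × (Fin k → EuclideanSpace ℝ (Fin d)) |
      θ ≤ (1 / (k : ℝ)) * ∑ i, ⟪p.1 - p.2 i, p.2 i - c⟫} ⊆ {p | ∃ i, (p.1, p.2 i) ∈ A} := by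
    intro p hp
    obtain ⟨i, -, hi⟩ := Finset.exists_le_of_le_expect (a := θ)
      (f := fun i => ⟪p.1 - p.2 i, p.2 i - c⟫) hnonempty
      (by rwa [Finset.expect_eq_sum_div_card, Finset.card_univ, Fintype.card_fin, div_eq_inv_mul,
        ← one_div])
    exact ⟨i, hi⟩
  simpa using (measure_mono havg).trans (measure_prod_pi_exists_mem_le (ι := Fin k) hA)

theorem learning_upper_bound_Y (d k : ℕ) (hd : 0 < d) (hk : 0 < k)
    (Y : Measure (EuclideanSpace ℝ (Fin d))) [IsProbabilityMeasure Y]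
    (c : EuclideanSpace ℝ (Fin d)) (θ : ℝ) :
    (Y.prod (Measure.pi fun _ : Fin k => Y))
        {p : EuclideanSpace ℝ (Fin d) × (Fin k → EuclideanSpace ℝ (Fin d)) |
          θ ≤ (1 / (k : ℝ)) * ∑ i, ⟪p.1 - p.2 i, p.2 i - c⟫}
      ≤ 1 - (1 - (Y.prod Y)
          {q : EuclideanSpace ℝ (Fin d) × EuclideanSpace ℝ (Fin d) |
            θ ≤ ⟪q.1 - q.2, q.2 - c⟫}) ^ k :=
  learning_upper_bound_Y_general d k hk Y c θ
end

section
/- Let H be a real inner product space with its Borel sigma-algebra, let mu be a Borel probability measure on H such that the product measure mu tensor mu assigns measure zero to the diagonal {(x, y) : x = y}, and let c be a point of H. Then (mu tensor mu)({(x, y) : inner product of (x - y) with (y - c) is at least 0}) is at most 1/2. -/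
/-!
If `0 ≤ ⟪x - y, y - c⟫` and `x ≠ y`, expanding `‖x - c‖² = ‖(x - y) + (y - c)‖²` shows that `y` is
strictly closer to `c` than `x`. Off the null diagonal, the event is therefore contained in the
event `‖y - c‖ < ‖x - c‖`, which is disjoint from its mirror image under `(x, y) ↦ (y, x)`; both
have the same `μ ⊗ μ`-measure, so each has measure at most `1 / 2`.
-/

open MeasureTheory
open scoped RealInnerProductSpace

theorem norm_sub_lt_norm_sub_of_inner_nonneg {H : Type*} [NormedAddCommGroup H]
    [InnerProductSpace ℝ H] {x y : H} (c : H) (hxy : x ≠ y) (h : 0 ≤ ⟪x - y, y - c⟫) :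
    ‖y - c‖ < ‖x - c‖ := by
  have hexpand : ‖x - c‖ ^ 2 = ‖x - y‖ ^ 2 + 2 * ⟪x - y, y - c⟫ + ‖y - c‖ ^ 2 := by
    rw [← norm_add_sq_real, sub_add_sub_cancel]
  have hpos : 0 < ‖x - y‖ ^ 2 := by positivity [sub_ne_zero_of_ne hxy]
  exact lt_of_pow_lt_pow_left₀ 2 (norm_nonneg _) (by nlinarith)

theorem Measure.prod_self_le_half_of_disjoint_preimage_swap {α : Type*} [MeasurableSpace α]
    (μ : Measure α) [IsProbabilityMeasure μ] {S : Set (α × α)} (hS : MeasurableSet S)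
    (hdisj : Disjoint S (Prod.swap ⁻¹' S)) :
    μ.prod μ S ≤ 1 / 2 := by
  have hswap : μ.prod μ (Prod.swap ⁻¹' S) = μ.prod μ S :=
    Measure.measurePreserving_swap.measure_preimage hS.nullMeasurableSet
  have htwice : 2 * μ.prod μ S ≤ 1 :=
    calc 2 * μ.prod μ S = μ.prod μ (S ∪ Prod.swap ⁻¹' S) := by
          rw [measure_union hdisj (measurable_swap hS), hswap, two_mul]
      _ ≤ 1 := prob_le_one
  rwa [ENNReal.le_div_iff_mul_le (Or.inl two_ne_zero) (Or.inl ENNReal.ofNat_ne_top), mul_comm]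

theorem separation_probability_le_half {H : Type*} [NormedAddCommGroup H]
    [InnerProductSpace ℝ H] [MeasurableSpace H] [BorelSpace H]
    (μ : Measure H) [IsProbabilityMeasure μ]
    (hdiag : (μ.prod μ) {p : H × H | p.1 = p.2} = 0) (c : H) :
    (μ.prod μ) {p : H × H | 0 ≤ ⟪p.1 - p.2, p.2 - c⟫} ≤ 1 / 2 := by
  set U : Set (H × H) := {p | ‖p.2 - c‖ < ‖p.1 - c‖}
  have hdist : Measurable fun z : H => ‖z - c‖ := by fun_prop
  have hU : MeasurableSet U :=
    measurableSet_lt (hdist.comp measurable_snd) (hdist.comp measurable_fst)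
  have hsub : {p : H × H | 0 ≤ ⟪p.1 - p.2, p.2 - c⟫} ⊆ U ∪ {p | p.1 = p.2} := by
    rintro ⟨x, y⟩ hp
    by_cases hxy : x = y
    · exact Or.inr hxy
    · exact Or.inl (norm_sub_lt_norm_sub_of_inner_nonneg c hxy hp)
  have hU_swap : Disjoint U (Prod.swap ⁻¹' U) :=
    Set.disjoint_left.2 fun p (h₁ : ‖p.2 - c‖ < ‖p.1 - c‖) (h₂ : ‖p.1 - c‖ < ‖p.2 - c‖) =>
      lt_asymm h₁ h₂
  calc (μ.prod μ) {p : H × H | 0 ≤ ⟪p.1 - p.2, p.2 - c⟫}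
      ≤ (μ.prod μ) U + (μ.prod μ) {p | p.1 = p.2} :=
        (measure_mono hsub).trans (measure_union_le _ _)
    _ = (μ.prod μ) U := by rw [hdiag, add_zero]
    _ ≤ 1 / 2 := Measure.prod_self_le_half_of_disjoint_preimage_swap μ hU hU_swap
end
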